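/- arXiv:2403.15292 — 3 statements merged into one kernel-verified Lean document; each statement's English description precedes it below -/
import Mathlib

section
/- Let A ∈ ℂ^{n×n} be invertible and M ∈ ℂ^{n×n} Hermitian invertible. Define E = D − M A^{-1} M and G = M A^{-1} M A^{-*} M where D ∈ ℂ^{n×n}. Then trace(E* G^{-1} E) = trace((M − A M^{-1} D)* M^{-1} (M − A M^{-1} D)). -/
open Matrix

/-!
Put `F = M - A M⁻¹ D`. Then `E = -(M A⁻¹ F)` and `G⁻¹ = M⁻¹ Aᴴ M⁻¹ A M⁻¹`, so that, using `Mᴴ = M`,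
`Eᴴ G⁻¹ E = Fᴴ A⁻ᴴ M · M⁻¹ Aᴴ M⁻¹ A M⁻¹ · M A⁻¹ F` telescopes to `Fᴴ M⁻¹ F`.
The two matrices already agree before taking traces.
-/

namespace Matrix

variable {n R : Type*} [Fintype n] [DecidableEq n] [CommRing R]

theorem sub_mul_nonsing_inv_mul_eq_neg {A M : Matrix n n R} (hA : IsUnit A.det)
    (hM : IsUnit M.det) (D : Matrix n n R) :
    D - M * A⁻¹ * M = -(M * A⁻¹ * (M - A * M⁻¹ * D)) := by
  have hcancel : M * A⁻¹ * (A * M⁻¹ * D) = D := by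
    simp only [mul_assoc, nonsing_inv_mul_cancel_left _ _ hA, mul_nonsing_inv_cancel_left _ _ hM]
  rw [Matrix.mul_sub, hcancel, neg_sub]

variable [StarRing R]

theorem isUnit_det_conjTranspose {A : Matrix n n R} (hA : IsUnit A.det) : IsUnit Aᴴ.det := by
  rw [det_conjTranspose]
  exact hA.star

theorem inv_mul_nonsing_inv_mul_conjTranspose_inv {A : Matrix n n R} (hA : IsUnit A.det)
    (M : Matrix n n R) :
    (M * A⁻¹ * M * Aᴴ⁻¹ * M)⁻¹ = M⁻¹ * Aᴴ * M⁻¹ * A * M⁻¹ := by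
  have hAH := isUnit_det_conjTranspose hA
  simp only [mul_inv_rev, nonsing_inv_nonsing_inv _ hA, nonsing_inv_nonsing_inv _ hAH,
    mul_assoc]

theorem IsHermitian.conjTranspose_mul_inv_mul_conjTranspose_mul {A M : Matrix n n R}
    (hA : IsUnit A.det) (hMh : M.IsHermitian) (hM : IsUnit M.det) (F : Matrix n n R) :
    (M * A⁻¹ * F)ᴴ * (M⁻¹ * Aᴴ * M⁻¹ * A * M⁻¹) * (M * A⁻¹ * F) = Fᴴ * M⁻¹ * F := by
  have hAH := isUnit_det_conjTranspose hA
  simp only [conjTranspose_mul, conjTranspose_nonsing_inv, hMh.eq, mul_assoc,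
    mul_nonsing_inv_cancel_left _ _ hM, nonsing_inv_mul_cancel_left _ _ hAH,
    nonsing_inv_mul_cancel_left _ _ hM, mul_nonsing_inv_cancel_left _ _ hA]

end Matrix

/-- Algebraic identity behind the convex reduced formulation: with
`E = D - M A⁻¹ M` and `G = M A⁻¹ M A⁻* M`, one has
`trace(E* G⁻¹ E) = trace((M - A M⁻¹ D)* M⁻¹ (M - A M⁻¹ D))`. -/
theorem stmt_6 {n : ℕ} (A M D : Matrix (Fin n) (Fin n) ℂ)
    (hA : IsUnit A.det) (hM : M.IsHermitian) (hMinv : IsUnit M.det)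
    (E G : Matrix (Fin n) (Fin n) ℂ)
    (hE : E = D - M * A⁻¹ * M)
    (hG : G = M * A⁻¹ * M * (Aᴴ)⁻¹ * M) :
    (Eᴴ * G⁻¹ * E).trace
      = ((M - A * M⁻¹ * D)ᴴ * M⁻¹ * (M - A * M⁻¹ * D)).trace := by
  rw [hE, hG, sub_mul_nonsing_inv_mul_eq_neg hA hMinv, inv_mul_nonsing_inv_mul_conjTranspose_inv hA,
    conjTranspose_neg, Matrix.neg_mul, neg_mul_neg,
    hM.conjTranspose_mul_inv_mul_conjTranspose_mul hA hMinv]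
end

section
/- Let G ∈ ℂ^{n×n} be Hermitian positive definite and e ∈ ℂ^n. For ρ > 0, the solution α of (G + ρI)α = e satisfies (1/2)‖Gα − e‖² + (ρ/2)α*Gα = (1/2) e*(I + ρ^{-1}G)^{-1} e. -/
/-!
At the solution `Gα - e = -ρα`, and `(I + ρ⁻¹G)⁻¹ = ρ (G + ρI)⁻¹` gives `(I + ρ⁻¹G)⁻¹ e = ρα`.
Both sides then reduce to `(ρ/2) e*α`: on the left the residual term `ρ²‖α‖²` cancels against
`α*Gα = α*e - ρ‖α‖²`, and `α*e = e*α` because `G + ρI` is Hermitian.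
-/

open Matrix
open scoped ComplexOrder

namespace Matrix

variable {n : Type*} [Fintype n]

theorem IsHermitian.star_mulVec_dotProduct {R : Type*} [CommSemiring R] [StarRing R]
    {A : Matrix n n R} (hA : A.IsHermitian) (x y : n → R) :
    star (A *ᵥ x) ⬝ᵥ y = star x ⬝ᵥ (A *ᵥ y) := by
  rw [star_mulVec, hA.eq, dotProduct_mulVec]

theorem sum_norm_sq_eq_star_dotProduct_self {𝕜 : Type*} [RCLike 𝕜] (v : n → 𝕜) :
    ∑ i, (‖v i‖ : 𝕜) ^ 2 = star v ⬝ᵥ v := by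
  simp only [dotProduct, Pi.star_apply, RCLike.star_def, RCLike.conj_mul]

section Field

variable [DecidableEq n] {K : Type*} [Field K] (G : Matrix n n K) {c : K}

theorem inv_one_add_inv_smul (hc : c ≠ 0) : (1 + c⁻¹ • G)⁻¹ = c • (G + c • 1)⁻¹ := by
  have hscale : 1 + c⁻¹ • G = c⁻¹ • (G + c • 1) := by
    rw [smul_add, smul_smul, inv_mul_cancel₀ hc, one_smul, add_comm]
  rw [hscale]
  by_cases hdet : IsUnit (G + c • 1).det
  · have : Invertible c⁻¹ := invertibleOfNonzero (inv_ne_zero hc)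
    rw [inv_smul _ _ hdet, invOf_eq_inv, inv_inv]
  · have hdet' : ¬ IsUnit (c⁻¹ • (G + c • 1)).det := by
      rw [det_smul, IsUnit.mul_iff, not_and]
      exact fun _ ↦ hdet
    rw [nonsing_inv_apply_not_isUnit _ hdet, nonsing_inv_apply_not_isUnit _ hdet', smul_zero]

theorem inv_one_add_inv_smul_mulVec_eq_smul (hc : c ≠ 0) (hdet : IsUnit (G + c • 1).det)
    {α e : n → K} (hα : (G + c • 1) *ᵥ α = e) : (1 + c⁻¹ • G)⁻¹ *ᵥ e = c • α := by
  rw [inv_one_add_inv_smul G hc, smul_mulVec, ← hα, mulVec_mulVec, nonsing_inv_mul _ hdet,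
    one_mulVec]

end Field

end Matrix

/-- Woodbury-type identity at the optimum: if `(G + ρ I) α = e` with `G` Hermitian
positive definite and `ρ > 0`, then
`(1/2)‖Gα - e‖² + (ρ/2) α* G α = (1/2) e* (I + ρ⁻¹ G)⁻¹ e`. -/
theorem stmt_8 {n : ℕ} (G : Matrix (Fin n) (Fin n) ℂ) (hG : G.PosDef)
    (e : Fin n → ℂ) (ρ : ℝ) (hρ : 0 < ρ)
    (α : Fin n → ℂ) (hα : (G + (ρ : ℂ) • (1 : Matrix (Fin n) (Fin n) ℂ)) *ᵥ α = e) :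
    (1 / 2 : ℂ) * (∑ i, (‖(G *ᵥ α - e) i‖ : ℂ) ^ 2)
        + ((ρ : ℂ) / 2) * (star α ⬝ᵥ (G *ᵥ α))
      = (1 / 2) * (star e ⬝ᵥ ((1 + (ρ : ℂ)⁻¹ • G)⁻¹ *ᵥ e)) := by
  have hA : (G + (ρ : ℂ) • 1).PosDef :=
    hG.add_posSemidef (PosSemidef.one.smul (by exact_mod_cast hρ.le))
  have hGα : G *ᵥ α = e - (ρ : ℂ) • α := by
    rw [← hα, add_mulVec, smul_mulVec, one_mulVec, add_sub_cancel_right]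
  have hsol : (1 + (ρ : ℂ)⁻¹ • G)⁻¹ *ᵥ e = (ρ : ℂ) • α :=
    inv_one_add_inv_smul_mulVec_eq_smul G (by exact_mod_cast hρ.ne')
      ((isUnit_iff_isUnit_det _).1 hA.isUnit) hα
  have hsym : star α ⬝ᵥ e = star e ⬝ᵥ α := by
    rw [← hα, hA.isHermitian.star_mulVec_dotProduct]
  have hnorm : ∑ i, (‖(G *ᵥ α - e) i‖ : ℂ) ^ 2 = star (G *ᵥ α - e) ⬝ᵥ (G *ᵥ α - e) :=
    sum_norm_sq_eq_star_dotProduct_self _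
  rw [hnorm, hGα, sub_sub_cancel_left, hsol]
  simp only [star_neg, star_smul, Complex.star_def, Complex.conj_ofReal, neg_dotProduct,
    dotProduct_neg, smul_dotProduct, dotProduct_smul, dotProduct_sub, smul_eq_mul, hsym]
  ring
end

section
/- Let G(λ) be the Gram matrix with entries g_{ij}(λ) = ⟨u_i(λ), u_j(λ)⟩_U, where for each λ, u_i(λ) ∈ U satisfies ⟨u_i(λ), v⟩_U − λ⟨u_i(λ), v⟩_{L²} = P_i(v) for all v ∈ U (the weak Schrödinger equation with c-weighted inner product), and set d_{ij}(λ) = P_i(u_j(λ)) = ⟨p_i, u_j(λ)⟩_U. Assume λ ↦ u_i(λ) is differentiable into U. Then g_{ij}(λ) = d_{ij}(λ) + λ d'_{ij}(λ), where d'_{ij} is the derivative in λ. -/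
/-!
Write `d(μ) = ⟪p, u(μ)⟫` for the solutions `u(μ)` with source `q`, and let `x` solve the equation
at `λ` with source `p`. Testing each equation against the other solution and using the symmetry of
`B` gives `(μ - λ) ⟪x, u(μ)⟫ = μ d(μ) - λ d(λ)`, so `⟪x, u(λ)⟫` is the derivative of `μ ↦ μ d(μ)`
at `λ`, that is `d(λ) + λ d'(λ)`.
-/

local notation "⟪" x ", " y "⟫" => @inner ℝ _ _ x y

/-- Carathéodory's criterion for differentiability. -/
theorem hasDerivAt_of_sub_eq_mul {𝕜 : Type*} [NontriviallyNormedField 𝕜] {g φ : 𝕜 → 𝕜} {x : 𝕜}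
    (hφ : ContinuousAt φ x) (h : ∀ y, g y - g x = (y - x) * φ y) : HasDerivAt g (φ x) x := by
  rw [hasDerivAt_iff_tendsto_slope]
  refine (hφ.tendsto.mono_left nhdsWithin_le_nhds).congr' ?_
  filter_upwards [self_mem_nhdsWithin] with y (hy : y ≠ x)
  rw [slope_def_field, h y, mul_div_cancel_left₀ _ (sub_ne_zero.mpr hy)]

namespace WeakSchrodinger

variable {U : Type*} [NormedAddCommGroup U] [InnerProductSpace ℝ U]

def IsSolution (B : U → U → ℝ) (lam : ℝ) (p x : U) : Prop :=
  ∀ v, ⟪x, v⟫ - lam * B x v = ⟪p, v⟫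

variable {B : U → U → ℝ} {lam mu : ℝ} {p q x y : U}

theorem inner_source_sub_inner_source (hB : ∀ a b, B a b = B b a)
    (hx : IsSolution B lam p x) (hy : IsSolution B mu q y) :
    ⟪p, y⟫ - ⟪q, x⟫ = (mu - lam) * B x y := by
  rw [← hx y, ← hy x, real_inner_comm x y, hB y x]
  ring

theorem inner_source_comm (hB : ∀ a b, B a b = B b a)
    (hx : IsSolution B lam p x) (hy : IsSolution B lam q y) : ⟪q, x⟫ = ⟪p, y⟫ := by
  have := inner_source_sub_inner_source hB hx hy
  rw [sub_self, zero_mul, sub_eq_zero] at this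
  exact this.symm

theorem sub_mul_inner (hB : ∀ a b, B a b = B b a)
    (hx : IsSolution B lam p x) (hy : IsSolution B mu q y) :
    (mu - lam) * ⟪x, y⟫ = mu * ⟪p, y⟫ - lam * ⟪q, x⟫ := by
  linear_combination (mu - lam) * hx y - lam * inner_source_sub_inner_source hB hx hy

theorem hasDerivAt_mul_inner_source (hB : ∀ a b, B a b = B b a) {u : ℝ → U}
    (hx : IsSolution B lam p x) (hu : ∀ mu, IsSolution B mu q (u mu)) (hcont : ContinuousAt u lam) :
    HasDerivAt (fun mu => mu * ⟪p, u mu⟫) ⟪x, u lam⟫ lam := by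
  refine hasDerivAt_of_sub_eq_mul (continuousAt_const.inner hcont) fun mu => ?_
  rw [sub_mul_inner hB hx (hu mu), inner_source_comm hB hx (hu lam)]

end WeakSchrodinger

open WeakSchrodinger in
theorem stmt_14_general {U : Type*} [NormedAddCommGroup U] [InnerProductSpace ℝ U]
    (B : U →ₗ[ℝ] U →ₗ[ℝ] ℝ) (hBsymm : ∀ u v, B u v = B v u)
    {n : ℕ} (p : Fin n → U) (u : Fin n → ℝ → U) (u' : Fin n → ℝ → U)
    (hderiv : ∀ i lam, HasDerivAt (u i) (u' i lam) lam)
    (hweak : ∀ i lam (v : U), ⟪u i lam, v⟫ - lam * B (u i lam) v = ⟪p i, v⟫)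
    (d : Fin n → Fin n → ℝ → ℝ) (hd : ∀ i j lam, d i j lam = ⟪p i, u j lam⟫) :
    ∀ i j lam, ⟪u i lam, u j lam⟫
      = d i j lam + lam * deriv (fun mu => d i j mu) lam := by
  intro i j lam
  have hd_fun : (fun mu => d i j mu) = fun mu => ⟪p i, u j mu⟫ := funext (hd i j)
  have hd_deriv : HasDerivAt (fun mu => d i j mu) ⟪p i, u' j lam⟫ lam := by
    rw [hd_fun]
    exact (hasDerivAt_const lam (p i)).inner ℝ (hderiv j lam) |>.congr_deriv (by simp)
  have hgram : HasDerivAt (fun mu => mu * d i j mu) ⟪u i lam, u j lam⟫ lam := by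
    simp only [hd]
    exact hasDerivAt_mul_inner_source hBsymm (hweak i lam) (fun mu => hweak j mu)
      (hderiv j lam).continuousAt
  have hprod := (hasDerivAt_id' lam).mul hd_deriv
  rw [hgram.unique hprod, hd_deriv.deriv, one_mul]

/-- Data-driven Gram identity for the Schrödinger family: if
`⟨uᵢ(λ), v⟩_U - λ B(uᵢ(λ), v) = ⟨pᵢ, v⟩_U` for all `v` (weak Schrödinger equation,
`B` the symmetric `L²` pairing), `λ ↦ uᵢ(λ)` is differentiable, and
`d i j λ = ⟨pᵢ, uⱼ(λ)⟩_U`, then `g i j λ = ⟨uᵢ(λ), uⱼ(λ)⟩_U = d i j λ + λ d' i j λ`. -/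
theorem stmt_14 {U : Type*} [NormedAddCommGroup U] [InnerProductSpace ℝ U]
    [CompleteSpace U]
    (B : U →ₗ[ℝ] U →ₗ[ℝ] ℝ) (hBsymm : ∀ u v, B u v = B v u)
    {n : ℕ} (p : Fin n → U) (u : Fin n → ℝ → U) (u' : Fin n → ℝ → U)
    (hderiv : ∀ i lam, HasDerivAt (u i) (u' i lam) lam)
    (hweak : ∀ i lam (v : U), ⟪u i lam, v⟫ - lam * B (u i lam) v = ⟪p i, v⟫)
    (d : Fin n → Fin n → ℝ → ℝ) (hd : ∀ i j lam, d i j lam = ⟪p i, u j lam⟫) :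
    ∀ i j lam, ⟪u i lam, u j lam⟫
      = d i j lam + lam * deriv (fun mu => d i j mu) lam :=
  stmt_14_general B hBsymm p u u' hderiv hweak d hd
end
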